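/- Let n ≥ 2 and let C be a cyclic ZMod 2-submodule of (Fin n → ZMod 2). Suppose C contains the indicator vector of a set of m cyclically consecutive coordinates for some m with 1 ≤ m ≤ n−1 (i.e., some left cyclic shift of the consecutive tail vector v_m belongs to C). Then C contains a codeword of Hamming weight exactly 2; in particular, the minimum distance of C is at most 2. (This is the key intermediate step in the proof of the paper's main theorem: adding a consecutive-block codeword to its shift by one produces a weight-2 codeword, contradicting distance at least 3.) -/

import Mathlib

/-- The consecutive tail vector `v_p`: indicator of the last `p` coordinates. -/
def tailVec (n p : ℕ) : Fin n → ZMod 2 := fun j => if n - p ≤ j.val then 1 else 0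

/-- Left cyclic shift by `l` of a vector `v : Fin n → ZMod 2`. -/
def shiftL {n : ℕ} (v : Fin n → ZMod 2) (l : ℕ) : Fin n → ZMod 2 :=
  fun j => v ⟨(j.val + l) % n, Nat.mod_lt _ j.pos⟩

/-- A code is cyclic if it is invariant under left cyclic shifts. -/
def IsCyclicCode {n : ℕ} (C : Submodule (ZMod 2) (Fin n → ZMod 2)) : Prop :=
  ∀ v ∈ C, ∀ l : ℕ, shiftL v l ∈ C

/-- The dual code `C⊥` with respect to the standard bilinear form. -/
def dualCode {n : ℕ} (C : Submodule (ZMod 2) (Fin n → ZMod 2)) :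
    Submodule (ZMod 2) (Fin n → ZMod 2) where
  carrier := {u | ∀ w ∈ C, ∑ j, u j * w j = 0}
  add_mem' := by
    intro a b ha hb w hw
    simp only [Set.mem_setOf_eq, Pi.add_apply, add_mul] at *
    rw [Finset.sum_add_distrib, ha w hw, hb w hw, add_zero]
  zero_mem' := by
    intro w hw
    simp
  smul_mem' := by
    intro c a ha w hw
    simp only [Set.mem_setOf_eq, Pi.smul_apply, smul_eq_mul, mul_assoc] at *
    rw [← Finset.mul_sum, ha w hw, mul_zero]

/-!
Cyclic invariance lets one shift the given block back to the tail vector `v_m` itself. Adding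
`v_m` to its left shift by one cancels every coordinate except the two ends of the block,
`n - m - 1` and `n - 1`, which leaves a codeword of weight 2.
-/

lemma shiftL_shiftL {n : ℕ} (v : Fin n → ZMod 2) (a b : ℕ) :
    shiftL (shiftL v a) b = shiftL v (b + a) := by
  funext j
  simp only [shiftL, Nat.mod_add_mod, add_assoc]

lemma shiftL_self {n : ℕ} (v : Fin n → ZMod 2) : shiftL v n = v := by
  funext j
  simp only [shiftL, Nat.add_mod_right, Nat.mod_eq_of_lt j.isLt]

lemma IsCyclicCode.mem_of_shiftL_mem {n : ℕ} {C : Submodule (ZMod 2) (Fin n → ZMod 2)}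
    (hC : IsCyclicCode C) {v : Fin n → ZMod 2} {l : ℕ} (hl : l ≤ n) (hv : shiftL v l ∈ C) :
    v ∈ C := by
  simpa only [shiftL_shiftL, Nat.sub_add_cancel hl, shiftL_self] using hC _ hv (n - l)

lemma ZMod.two_ite_add_ite_ne_zero_iff (P Q : Prop) [Decidable P] [Decidable Q] :
    ((if P then 1 else 0) + (if Q then 1 else 0) : ZMod 2) ≠ 0 ↔ Xor P Q := by
  split_ifs <;> simp_all [Xor]; decide

lemma tailVec_add_shiftL_one_ne_zero_iff {n m : ℕ} (hm1 : 1 ≤ m) (hmn : m < n) (j : Fin n) :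
    (tailVec n m + shiftL (tailVec n m) 1) j ≠ 0 ↔ j.val = n - m - 1 ∨ j.val = n - 1 := by
  simp only [Pi.add_apply, shiftL, tailVec, ZMod.two_ite_add_ite_ne_zero_iff, Xor]
  rcases Nat.lt_or_ge (j.val + 1) n with hj | hj
  · rw [Nat.mod_eq_of_lt hj]
    omega
  · rw [show j.val + 1 = n by omega, Nat.mod_self]
    omega

theorem hammingNorm_tailVec_add_shiftL_one {n m : ℕ} (hm1 : 1 ≤ m) (hmn : m < n) :
    hammingNorm (tailVec n m + shiftL (tailVec n m) 1) = 2 := by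
  rw [hammingNorm, Finset.card_eq_two]
  refine ⟨⟨n - m - 1, by omega⟩, ⟨n - 1, by omega⟩, by simp only [ne_eq, Fin.mk.injEq]; omega, ?_⟩
  ext j
  simp only [Finset.mem_filter, Finset.mem_univ, true_and, Finset.mem_insert,
    Finset.mem_singleton, tailVec_add_shiftL_one_ne_zero_iff hm1 hmn j, Fin.ext_iff]

theorem stmt8_general (n : ℕ) (C : Submodule (ZMod 2) (Fin n → ZMod 2))
    (hC : IsCyclicCode C) (m l : ℕ) (hm1 : 1 ≤ m) (hm2 : m ≤ n - 1) (hl : l < n)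
    (hmem : shiftL (tailVec n m) l ∈ C) :
    ∃ w ∈ C, hammingNorm w = 2 := by
  have htail : tailVec n m ∈ C := hC.mem_of_shiftL_mem hl.le hmem
  exact ⟨_, C.add_mem htail (hC _ htail 1), hammingNorm_tailVec_add_shiftL_one hm1 (by omega)⟩

theorem stmt8 (n : ℕ) (hn : 2 ≤ n) (C : Submodule (ZMod 2) (Fin n → ZMod 2))
    (hC : IsCyclicCode C) (m l : ℕ) (hm1 : 1 ≤ m) (hm2 : m ≤ n - 1) (hl : l < n)
    (hmem : shiftL (tailVec n m) l ∈ C) :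
    ∃ w ∈ C, hammingNorm w = 2 :=
  stmt8_general n C hC m l hm1 hm2 hl hmem
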